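/- arXiv:2501.09875 — 9 statements merged into one kernel-verified Lean document; each statement's English description precedes it below -/
import Mathlib

section
/- Each vector q^k (for k = 1,...,N), where q^k_j = min(j,k)/k, is an extreme point of the polytope Q = { q ∈ [0,1]^{N+1} : q_{j-1} ≥ ((j-1)/j) q_j for j = 1,...,N }. -/
/-! A point of `Q` written as a proper convex combination of two points of `Q` forces both of them
to satisfy with equality every constraint that the point itself satisfies with equality. For `q^k`
these are `q_j ≤ 1` for `j ≥ k` and `q_{j-1} ≥ ((j-1)/j) q_j` for `j ≤ k`; the latter force
`q_j = j q_1` for `j ≤ k`, and together with `q_k = 1` they pin down `q^k` uniquely. -/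

/-- `Q`, with `q_{j-1} ≥ ((j-1)/j) q_j` cleared of denominators and reindexed by `j - 1`. -/
def polytopeQ (N : ℕ) : Set (ℕ → ℝ) :=
  {q | (∀ j ≤ N, 0 ≤ q j ∧ q j ≤ 1) ∧ ∀ j < N, (j : ℝ) * q (j + 1) ≤ (j + 1) * q j}

noncomputable def topVec (k j : ℕ) : ℝ := ((min j k : ℕ) : ℝ) / k

lemma ratio_constraint_iff (N : ℕ) (q : ℕ → ℝ) :
    (∀ j, 1 ≤ j → j ≤ N → q (j - 1) ≥ (((j : ℝ) - 1) / (j : ℝ)) * q j) ↔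
      ∀ j < N, (j : ℝ) * q (j + 1) ≤ (j + 1) * q j := by
  constructor
  · intro h j hj
    have hj' := h (j + 1) (by omega) hj
    simp only [Nat.add_sub_cancel, Nat.cast_add, Nat.cast_one, add_sub_cancel_right] at hj'
    rwa [ge_iff_le, div_mul_eq_mul_div, div_le_iff₀ (by positivity), mul_comm (q j)] at hj'
  · rintro h (_ | j) h1 h2
    · omega
    · simp only [Nat.add_sub_cancel, Nat.cast_add, Nat.cast_one, add_sub_cancel_right]
      rw [ge_iff_le, div_mul_eq_mul_div, div_le_iff₀ (by positivity), mul_comm (q j)]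
      exact h j h2

lemma topVec_of_le {k j : ℕ} (h : j ≤ k) : topVec k j = j / k := by
  rw [topVec, min_eq_left h]

lemma topVec_of_ge {k j : ℕ} (hk : 1 ≤ k) (h : k ≤ j) : topVec k j = 1 := by
  rw [topVec, min_eq_right h, div_self (by positivity)]

lemma topVec_mem_polytopeQ (N k : ℕ) : topVec k ∈ polytopeQ N := by
  refine ⟨fun j _ => ⟨by unfold topVec; positivity, ?_⟩, fun j _ => ?_⟩
  · exact div_le_one_of_le₀ (by exact_mod_cast min_le_right j k) (Nat.cast_nonneg k)
  · rcases le_or_gt k j with hkj | hjk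
    · simp only [topVec, min_eq_right hkj, min_eq_right (hkj.trans j.le_succ)]
      gcongr
      linarith
    · simp only [topVec, min_eq_left hjk.le, min_eq_left (Nat.succ_le_of_lt hjk)]
      push_cast
      rw [mul_div_assoc', mul_div_assoc', mul_comm]

lemma eq_zero_of_convexComb_eq_zero {lam x y : ℝ} (h0 : 0 < lam) (h1 : lam < 1)
    (hx : 0 ≤ x) (hy : 0 ≤ y) (h : lam * x + (1 - lam) * y = 0) : x = 0 := by
  nlinarith [mul_nonneg h0.le hx, mul_nonneg (sub_nonneg.2 h1.le) hy]

lemma eq_natCast_mul_of_succ_mul_eq {a : ℕ → ℝ} {k : ℕ} (hk : 1 ≤ k)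
    (h : ∀ j < k, ((j : ℝ) + 1) * a j = j * a (j + 1)) : ∀ j ≤ k, a j = j * a 1 := by
  intro j hj
  induction j with
  | zero => simpa using h 0 (by omega)
  | succ j ih =>
    rcases Nat.eq_zero_or_pos j with rfl | hj0
    · simp
    · have hj0' : (0 : ℝ) < j := by exact_mod_cast hj0
      have hstep := h j (by omega)
      rw [ih (by omega)] at hstep
      push_cast
      nlinarith

lemma eq_topVec_of_convexComb {N k : ℕ} (hk : 1 ≤ k) (hkN : k ≤ N) {a b : ℕ → ℝ}
    (ha : a ∈ polytopeQ N) (hb : b ∈ polytopeQ N) {lam : ℝ} (h0 : 0 < lam) (h1 : lam < 1)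
    (hcomb : ∀ j ≤ N, topVec k j = lam * a j + (1 - lam) * b j) :
    ∀ j ≤ N, a j = topVec k j := by
  have hsat : ∀ j, k ≤ j → j ≤ N → a j = 1 := by
    intro j hkj hjN
    have hslack := eq_zero_of_convexComb_eq_zero h0 h1
      (sub_nonneg.2 (ha.1 j hjN).2) (sub_nonneg.2 (hb.1 j hjN).2)
      (by linarith [hcomb j hjN, topVec_of_ge hk hkj])
    linarith
  have htight : ∀ j < k, ((j : ℝ) + 1) * a j = j * a (j + 1) := by
    intro j hjk
    have hq : ((j : ℝ) + 1) * topVec k j - j * topVec k (j + 1) = 0 := by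
      rw [topVec_of_le hjk.le, topVec_of_le hjk]
      push_cast
      ring
    have hslack := eq_zero_of_convexComb_eq_zero h0 h1
      (sub_nonneg.2 (ha.2 j (by omega))) (sub_nonneg.2 (hb.2 j (by omega)))
      (by rw [← hq, hcomb j (by omega), hcomb (j + 1) (by omega)]; ring)
    linarith
  have hlin := eq_natCast_mul_of_succ_mul_eq hk htight
  have ha1 : a 1 = 1 / k := by
    rw [eq_div_iff (by positivity), mul_comm, ← hlin k le_rfl, hsat k le_rfl hkN]
  intro j hjN
  rcases le_or_gt k j with hkj | hjk
  · rw [hsat j hkj hjN, topVec_of_ge hk hkj]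
  · rw [hlin j hjk.le, ha1, topVec_of_le hjk.le, mul_one_div]

theorem stmt3_general (N : ℕ) (k : ℕ) (hk : 1 ≤ k) (hkN : k ≤ N)
    (qk : ℕ → ℝ) (hqk : ∀ j, qk j = ((min j k : ℕ) : ℝ) / (k : ℝ)) :
    (∀ j ≤ N, 0 ≤ qk j ∧ qk j ≤ 1) ∧
    (∀ j, 1 ≤ j → j ≤ N → qk (j - 1) ≥ (((j : ℝ) - 1) / (j : ℝ)) * qk j) ∧
    (∀ a b : ℕ → ℝ,
      (∀ j ≤ N, 0 ≤ a j ∧ a j ≤ 1) →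
      (∀ j, 1 ≤ j → j ≤ N → a (j - 1) ≥ (((j : ℝ) - 1) / (j : ℝ)) * a j) →
      (∀ j ≤ N, 0 ≤ b j ∧ b j ≤ 1) →
      (∀ j, 1 ≤ j → j ≤ N → b (j - 1) ≥ (((j : ℝ) - 1) / (j : ℝ)) * b j) →
      ∀ lam : ℝ, 0 < lam → lam < 1 →
        (∀ j ≤ N, qk j = lam * a j + (1 - lam) * b j) →
        ∀ j ≤ N, a j = b j) := by
  obtain rfl : qk = topVec k := funext hqk
  obtain ⟨hbounds, hratio⟩ := topVec_mem_polytopeQ N k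
  refine ⟨hbounds, (ratio_constraint_iff N _).2 hratio, ?_⟩
  intro a b ha hac hb hbc lam h0 h1 hcomb j hj
  have haQ : a ∈ polytopeQ N := ⟨ha, (ratio_constraint_iff N a).1 hac⟩
  have hbQ : b ∈ polytopeQ N := ⟨hb, (ratio_constraint_iff N b).1 hbc⟩
  have hcomb' : ∀ j ≤ N, topVec k j = (1 - lam) * b j + (1 - (1 - lam)) * a j := by
    intro j hj
    rw [hcomb j hj]
    ring
  rw [eq_topVec_of_convexComb hk hkN haQ hbQ h0 h1 hcomb j hj,
    eq_topVec_of_convexComb hk hkN hbQ haQ (sub_pos.2 h1) (sub_lt_self 1 h0) hcomb' j hj]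

/-- each top-k vector q^k (q^k_j = min(j,k)/k) is an extreme point of the
polytope Q = { q ∈ [0,1]^{N+1} : q_{j-1} ≥ ((j-1)/j) q_j, j = 1,...,N }. -/
theorem stmt3 (N : ℕ) (hN : 2 ≤ N) (k : ℕ) (hk : 1 ≤ k) (hkN : k ≤ N)
    (qk : ℕ → ℝ) (hqk : ∀ j, qk j = ((min j k : ℕ) : ℝ) / (k : ℝ)) :
    (∀ j ≤ N, 0 ≤ qk j ∧ qk j ≤ 1) ∧
    (∀ j, 1 ≤ j → j ≤ N → qk (j - 1) ≥ (((j : ℝ) - 1) / (j : ℝ)) * qk j) ∧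
    (∀ a b : ℕ → ℝ,
      (∀ j ≤ N, 0 ≤ a j ∧ a j ≤ 1) →
      (∀ j, 1 ≤ j → j ≤ N → a (j - 1) ≥ (((j : ℝ) - 1) / (j : ℝ)) * a j) →
      (∀ j ≤ N, 0 ≤ b j ∧ b j ≤ 1) →
      (∀ j, 1 ≤ j → j ≤ N → b (j - 1) ≥ (((j : ℝ) - 1) / (j : ℝ)) * b j) →
      ∀ lam : ℝ, 0 < lam → lam < 1 →
        (∀ j ≤ N, qk j = lam * a j + (1 - lam) * b j) →
        ∀ j ≤ N, a j = b j) :=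
  stmt3_general N k hk hkN qk hqk
end

section
/- Every vector q ∈ ℝ^{N+1} admits the decomposition q = Σ_{k=0}^{N-1} ( q_k − (k/(k+1)) q_{k+1} ) Δ^k + q_N Δ^N, where Δ^0 = (1,0,...,0) and for k ≥ 1, Δ^k_j = (j/k)·𝟙[j ≤ k]. Moreover, if q ∈ Q (i.e., q_{j-1} ≥ ((j-1)/j) q_j for all j), then every coefficient in this decomposition is nonnegative. -/
/-
The decomposition is proved by induction on `N`: passing from `N` to `N + 1` rescales
`Δ^N` to `(N/(N+1)) Δ^N = Δ^{N+1}` on the coordinates `j ≤ N`, which exactly absorbs the new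
coefficient of `Δ^N`, while the new coordinate `N + 1` is seen only by `Δ^{N+1}`, where it is `1`.
Nonnegativity of the coefficients is the defining inequality of `Q` read at `j = k + 1`.
-/

/-- The vectors Δ^k: Δ^0 = (1,0,...,0), and Δ^k_j = (j/k)·𝟙[j ≤ k] for k ≥ 1. -/
noncomputable def Delta (k j : ℕ) : ℝ :=
  if k = 0 then (if j = 0 then 1 else 0) else if j ≤ k then (j : ℝ) / (k : ℝ) else 0

open Finset

lemma Delta_self (k : ℕ) : Delta k k = 1 := by
  rcases eq_or_ne k 0 with rfl | hk
  · simp [Delta]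
  · simp [Delta, hk]

lemma Delta_of_lt {k j : ℕ} (h : k < j) : Delta k j = 0 := by
  unfold Delta
  split_ifs <;> first | rfl | omega

lemma Delta_succ_of_le {k j : ℕ} (h : j ≤ k) :
    Delta (k + 1) j = (k : ℝ) / ((k : ℝ) + 1) * Delta k j := by
  rcases eq_or_ne k 0 with rfl | hk
  · obtain rfl := Nat.le_zero.mp h
    simp [Delta]
  · have hk' : (k : ℝ) ≠ 0 := Nat.cast_ne_zero.mpr hk
    simp only [Delta, hk, Nat.succ_ne_zero, if_false, h, Nat.le_succ_of_le h, if_true]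
    push_cast
    field_simp

theorem eq_sum_mul_Delta (q : ℕ → ℝ) (N : ℕ) :
    ∀ j ≤ N, q j =
      (∑ k ∈ range N, (q k - ((k : ℝ) / ((k : ℝ) + 1)) * q (k + 1)) * Delta k j)
        + q N * Delta N j := by
  induction N with
  | zero =>
    intro j hj
    obtain rfl : j = 0 := Nat.le_zero.mp hj
    simp [Delta_self]
  | succ N ih =>
    intro j hj
    rw [sum_range_succ]
    rcases Nat.lt_or_eq_of_le hj with hlt | rfl
    · rw [Delta_succ_of_le (Nat.le_of_lt_succ hlt), ih j (Nat.le_of_lt_succ hlt)]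
      ring
    · rw [sum_eq_zero fun k hk => by rw [Delta_of_lt (Nat.lt_succ_of_lt (mem_range.mp hk)), mul_zero],
        Delta_of_lt (Nat.lt_succ_self N), Delta_self]
      ring

lemma sub_mul_succ_nonneg_of_ge {q : ℕ → ℝ} {k : ℕ}
    (h : q k ≥ ((((k + 1 : ℕ) : ℝ) - 1) / ((k + 1 : ℕ) : ℝ)) * q (k + 1)) :
    0 ≤ q k - ((k : ℝ) / ((k : ℝ) + 1)) * q (k + 1) := by
  push_cast at h
  rw [add_sub_cancel_right] at h
  linarith

theorem stmt4_general (N : ℕ) (q : ℕ → ℝ) :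
    (∀ j ≤ N, q j =
      (∑ k ∈ Finset.range N, (q k - ((k : ℝ) / ((k : ℝ) + 1)) * q (k + 1)) * Delta k j)
        + q N * Delta N j) ∧
    ((∀ j ≤ N, 0 ≤ q j ∧ q j ≤ 1) →
      (∀ j, 1 ≤ j → j ≤ N → q (j - 1) ≥ (((j : ℝ) - 1) / (j : ℝ)) * q j) →
      (∀ k < N, 0 ≤ q k - ((k : ℝ) / ((k : ℝ) + 1)) * q (k + 1)) ∧ 0 ≤ q N) := by
  refine ⟨eq_sum_mul_Delta q N, fun hq hQ => ⟨fun k hk => ?_, (hq N le_rfl).1⟩⟩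
  exact sub_mul_succ_nonneg_of_ge (hQ (k + 1) (Nat.le_add_left 1 k) hk)

/-- every q decomposes as
q = Σ_{k=0}^{N-1} (q_k − (k/(k+1)) q_{k+1}) Δ^k + q_N Δ^N, and for q ∈ Q all the
coefficients are nonnegative. -/
theorem stmt4 (N : ℕ) (hN : 2 ≤ N) (q : ℕ → ℝ) :
    (∀ j ≤ N, q j =
      (∑ k ∈ Finset.range N, (q k - ((k : ℝ) / ((k : ℝ) + 1)) * q (k + 1)) * Delta k j)
        + q N * Delta N j) ∧
    ((∀ j ≤ N, 0 ≤ q j ∧ q j ≤ 1) →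
      (∀ j, 1 ≤ j → j ≤ N → q (j - 1) ≥ (((j : ℝ) - 1) / (j : ℝ)) * q j) →
      (∀ k < N, 0 ≤ q k - ((k : ℝ) / ((k : ℝ) + 1)) * q (k + 1)) ∧ 0 ≤ q N) :=
  stmt4_general N q
end

section
/- Let π_0,...,π_N > 0 sum to 1 and let 0 ≤ v_0 < v_1 < ... < v_N. For k = 0,...,N define β_k = (Σ_j π_j Δ^k_j v_j)/(Σ_j π_j Δ^k_j), where Δ^0 = (1,0,...,0) and Δ^k_j = (j/k)𝟙[j≤k] for k ≥ 1. Then 0 ≤ β_0 < β_1 < ... < β_N. -/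
/-- β_k: the Δ^k-weighted (with prior P) average of the v_j. -/
noncomputable def beta (N : ℕ) (P v : ℕ → ℝ) (k : ℕ) : ℝ :=
  (∑ j ∈ Finset.range (N + 1), P j * Delta k j * v j) /
    (∑ j ∈ Finset.range (N + 1), P j * Delta k j)

lemma vmono (N : ℕ) (v : ℕ → ℝ) (hv : ∀ j < N, v j < v (j + 1)) :
    ∀ i j, i < j → j ≤ N → v i < v j := by
  intro i j hij hjN
  induction j with
  | zero => omega
  | succ m ih =>
    rcases Nat.lt_succ_iff_lt_or_eq.mp hij with h | h
    · exact (ih h (by omega)).trans (hv m (by omega))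
    · subst h; exact hv i (by omega)

/-- 0 ≤ β_0 < β_1 < ... < β_N. -/
theorem stmt7 (N : ℕ) (hN : 2 ≤ N) (P v : ℕ → ℝ)
    (hP : ∀ j ≤ N, 0 < P j)
    (hsum : ∑ j ∈ Finset.range (N + 1), P j = 1)
    (hv0 : 0 ≤ v 0) (hv : ∀ j < N, v j < v (j + 1)) :
    0 ≤ beta N P v 0 ∧ ∀ k < N, beta N P v k < beta N P v (k + 1) := by
  set S : ℕ → ℝ := fun k => ∑ j ∈ Finset.range (k + 1), P j * j with hS
  set T : ℕ → ℝ := fun k => ∑ j ∈ Finset.range (k + 1), P j * j * v j with hT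
  -- beta for k ≥ 1
  have hbeta : ∀ k, 1 ≤ k → k ≤ N → beta N P v k = T k / S k := by
    intro k hk1 hkN
    have hk0 : (k : ℝ) ≠ 0 := Nat.cast_ne_zero.mpr (by omega)
    have hnum : (∑ j ∈ Finset.range (N + 1), P j * Delta k j * v j)
        = (1 / k) * T k := by
      rw [hT, Finset.mul_sum]
      rw [← Finset.sum_subset (Finset.range_subset_range.mpr (show k + 1 ≤ N + 1 by omega))]
      · apply Finset.sum_congr rfl
        intro j hj
        simp only [Finset.mem_range] at hj
        have : Delta k j = (j : ℝ) / k := by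
          simp [Delta, Nat.le_of_lt_succ hj, show ¬ k = 0 by omega]
        rw [this]; field_simp
      · intro j _ hj
        simp only [Finset.mem_range] at hj
        have : Delta k j = 0 := by
          simp [Delta, show ¬ j ≤ k by omega, show ¬ k = 0 by omega]
        simp [this]
    have hden : (∑ j ∈ Finset.range (N + 1), P j * Delta k j)
        = (1 / k) * S k := by
      rw [hS, Finset.mul_sum]
      rw [← Finset.sum_subset (Finset.range_subset_range.mpr (show k + 1 ≤ N + 1 by omega))]
      · apply Finset.sum_congr rfl
        intro j hj
        simp only [Finset.mem_range] at hj
        have : Delta k j = (j : ℝ) / k := by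
          simp [Delta, Nat.le_of_lt_succ hj, show ¬ k = 0 by omega]
        rw [this]; field_simp
      · intro j _ hj
        simp only [Finset.mem_range] at hj
        have : Delta k j = 0 := by
          simp [Delta, show ¬ j ≤ k by omega, show ¬ k = 0 by omega]
        simp [this]
    rw [beta, hnum, hden, mul_div_mul_left _ _ (by positivity : (1 : ℝ) / k ≠ 0)]
  -- positivity of S
  have hSpos : ∀ k, 1 ≤ k → k ≤ N → 0 < S k := by
    intro k hk1 hkN
    apply Finset.sum_pos'
    · intro j hj
      simp only [Finset.mem_range] at hj
      exact mul_nonneg (hP j (by omega)).le (Nat.cast_nonneg j)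
    · exact ⟨1, Finset.mem_range.mpr (by omega), by
        simpa using (hP 1 (by omega))⟩
  -- T k < v (k+1) * S k
  have hTlt : ∀ k, 1 ≤ k → k + 1 ≤ N → T k < v (k + 1) * S k := by
    intro k hk1 hkN
    rw [hS, Finset.mul_sum]
    apply Finset.sum_lt_sum
    · intro j hj
      simp only [Finset.mem_range] at hj
      rcases Nat.eq_zero_or_pos j with h0 | hpos
      · simp [h0]
      · have hvj : v j < v (k + 1) := vmono N v hv j (k + 1) (by omega) hkN
        have : (0 : ℝ) < P j * j := by
          have := hP j (by omega)
          positivity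
        nlinarith
    · refine ⟨k, Finset.mem_range.mpr (by omega), ?_⟩
      have hvk : v k < v (k + 1) := vmono N v hv k (k + 1) (by omega) hkN
      have : (0 : ℝ) < P k * k := by
        have := hP k (by omega)
        have : (0:ℝ) < (k:ℝ) := Nat.cast_pos.mpr (by omega)
        positivity
      nlinarith
  -- the step for k ≥ 1
  have hstep : ∀ k, 1 ≤ k → k + 1 ≤ N → T k / S k < T (k + 1) / S (k + 1) := by
    intro k hk1 hkN
    have hSk := hSpos k hk1 (by omega)
    have hSk1 := hSpos (k + 1) (by omega) hkN
    rw [div_lt_div_iff₀ hSk hSk1]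
    have hTsucc : T (k + 1) = T k + P (k + 1) * (k + 1) * v (k + 1) := by
      simp only [hT]; rw [Finset.sum_range_succ]; push_cast; ring
    have hSsucc : S (k + 1) = S k + P (k + 1) * (k + 1) := by
      simp only [hS]; rw [Finset.sum_range_succ]; push_cast; ring
    have hb : (0 : ℝ) < P (k + 1) * (k + 1) := by
      have := hP (k + 1) (by omega)
      positivity
    have hT' := hTlt k hk1 hkN
    rw [hTsucc, hSsucc]
    nlinarith
  -- beta 0 = v 0
  have hbeta0 : beta N P v 0 = v 0 := by
    have hnum : (∑ j ∈ Finset.range (N + 1), P j * Delta 0 j * v j) = P 0 * v 0 := by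
      rw [Finset.sum_eq_single 0]
      · simp [Delta]
      · intro j _ hj; simp [Delta, hj]
      · intro h; simp at h
    have hden : (∑ j ∈ Finset.range (N + 1), P j * Delta 0 j) = P 0 := by
      rw [Finset.sum_eq_single 0]
      · simp [Delta]
      · intro j _ hj; simp [Delta, hj]
      · intro h; simp at h
    have h0 : P 0 ≠ 0 := (hP 0 (by omega)).ne'
    rw [beta, hnum, hden]; field_simp
  -- beta 1 = v 1
  have hbeta1 : beta N P v 1 = v 1 := by
    rw [hbeta 1 le_rfl (by omega)]
    have hT1 : T 1 = P 1 * v 1 := by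
      rw [hT]; simp [Finset.sum_range_succ]
    have hS1 : S 1 = P 1 := by
      rw [hS]; simp [Finset.sum_range_succ]
    have h1 : P 1 ≠ 0 := (hP 1 (by omega)).ne'
    rw [hT1, hS1]; field_simp
  refine ⟨by rw [hbeta0]; exact hv0, ?_⟩
  intro k hk
  rcases Nat.eq_zero_or_pos k with h0 | hpos
  · subst h0
    rw [hbeta0, hbeta1]
    exact hv 0 (by omega)
  · rw [hbeta k hpos (by omega), hbeta (k + 1) (by omega) (by omega)]
    exact hstep k hpos (by omega)
end

section
/- Let N ≥ 2 and define Q = { q ∈ [0,1]^{N+1} : q_{j-1} ≥ ((j-1)/j) q_j, j = 1,...,N }. Let q ∈ Q and suppose there exists k ∈ {0,...,N−1} with q_k > (k/(k+1)) q_{k+1} and q_{k+1} < 1. Let π_0,...,π_N > 0 and 0 ≤ v_0 < ... < v_N. Then there exists q̃ ∈ Q with Σ_j π_j q̃_j = Σ_j π_j q_j and Σ_j π_j q̃_j v_j > Σ_j π_j q_j v_j. -/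
/-!
Move a small amount `ε` of mass into coordinate `k + 1` and take `(π_{k+1}/π_k) ε` out of
coordinate `k`. This keeps the `π`-expectation of `q` fixed and raises that of `q v` by
`π_{k+1} ε (v_{k+1} - v_k) > 0`. Lowering `q_k` or raising `q_{k+1}` can only violate the constraint
linking these two coordinates, which is slack, and the bound `q_{k+1} ≤ 1`, which is slack too;
so for small enough `ε` the perturbed vector stays in `Q`.
-/

open Filter Topology Finset

def SatisfiesChain (N : ℕ) (q : ℕ → ℝ) : Prop :=
  ∀ j, 1 ≤ j → j ≤ N → q (j - 1) ≥ (((j : ℝ) - 1) / (j : ℝ)) * q j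

lemma SatisfiesChain.of_le_of_le {N k : ℕ} {q q' : ℕ → ℝ} (hq : SatisfiesChain N q)
    (hge : ∀ j ≠ k, q j ≤ q' j) (hle : ∀ j ≠ k + 1, q' j ≤ q j)
    (hk : (k : ℝ) / ((k : ℝ) + 1) * q' (k + 1) ≤ q' k) : SatisfiesChain N q' := by
  intro j hj1 hjN
  by_cases hjk : j = k + 1
  · subst hjk
    simpa using hk
  · have hcoef : 0 ≤ ((j : ℝ) - 1) / (j : ℝ) :=
      div_nonneg (by simpa using (Nat.one_le_cast (α := ℝ)).mpr hj1) (Nat.cast_nonneg j)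
    calc ((j : ℝ) - 1) / j * q' j ≤ ((j : ℝ) - 1) / j * q j :=
          mul_le_mul_of_nonneg_left (hle j hjk) hcoef
      _ ≤ q (j - 1) := hq j hj1 hjN
      _ ≤ q' (j - 1) := hge (j - 1) (by omega)

lemma exists_pos_add_le_one_and_mul_le {r c x y : ℝ} (hxy : r * y < x) (hy : y < 1) :
    ∃ ε > 0, y + ε ≤ 1 ∧ r * (y + ε) ≤ x - c * ε := by
  have hnear : ∀ᶠ ε in 𝓝 (0 : ℝ), y + ε < 1 ∧ r * (y + ε) < x - c * ε := by
    refine (Tendsto.eventually_lt ?_ tendsto_const_nhds hy).and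
      (Tendsto.eventually_lt ?_ ?_ hxy)
    · exact (continuous_const.add continuous_id).tendsto' 0 y (by simp)
    · exact (continuous_const.mul (continuous_const.add continuous_id)).tendsto' 0 (r * y)
        (by simp)
    · exact (continuous_const.sub (continuous_const.mul continuous_id)).tendsto' 0 x (by simp)
  obtain ⟨ε, ⟨h1, h2⟩, hε⟩ :=
    ((eventually_nhdsWithin_of_eventually_nhds (s := Set.Ioi 0) hnear).and
      self_mem_nhdsWithin).exists
  exact ⟨ε, hε, h1.le, h2.le⟩

def transfer (q : ℕ → ℝ) (k : ℕ) (δ ε : ℝ) : ℕ → ℝ :=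
  q - Pi.single k δ + Pi.single (k + 1) ε

section transfer

variable {q : ℕ → ℝ} {k j : ℕ} {δ ε : ℝ}

@[simp]
lemma transfer_apply_self : transfer q k δ ε k = q k - δ := by
  simp [transfer]

@[simp]
lemma transfer_apply_succ : transfer q k δ ε (k + 1) = q (k + 1) + ε := by
  simp [transfer]

lemma le_transfer (hε : 0 ≤ ε) (hj : j ≠ k) : q j ≤ transfer q k δ ε j := by
  simp only [transfer, Pi.add_apply, Pi.sub_apply, Pi.single_apply, hj, if_false, sub_zero]
  split_ifs <;> linarith

lemma transfer_le (hδ : 0 ≤ δ) (hj : j ≠ k + 1) : transfer q k δ ε j ≤ q j := by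
  simp only [transfer, Pi.add_apply, Pi.sub_apply, Pi.single_apply, hj, if_false, add_zero]
  split_ifs <;> linarith

lemma sum_mul_transfer {N : ℕ} (hk : k + 1 ≤ N) (w : ℕ → ℝ) :
    ∑ j ∈ range (N + 1), w j * transfer q k δ ε j =
      ∑ j ∈ range (N + 1), w j * q j - w k * δ + w (k + 1) * ε := by
  simp only [transfer, Pi.add_apply, Pi.sub_apply, mul_add, mul_sub, sum_add_distrib,
    sum_sub_distrib, Pi.single_apply, mul_ite, mul_zero, sum_ite_eq', mem_range]
  rw [if_pos (by omega), if_pos (by omega)]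

end transfer

theorem stmt10_general (N : ℕ) (hN : 2 ≤ N) (P v q : ℕ → ℝ)
    (hP : ∀ j ≤ N, 0 < P j)
    (hv : ∀ j < N, v j < v (j + 1))
    (hq01 : ∀ j ≤ N, 0 ≤ q j ∧ q j ≤ 1)
    (hchain : ∀ j, 1 ≤ j → j ≤ N → q (j - 1) ≥ (((j : ℝ) - 1) / (j : ℝ)) * q j)
    (k : ℕ) (hk : k ≤ N - 1)
    (hgap : q k > ((k : ℝ) / ((k : ℝ) + 1)) * q (k + 1)) (hlt : q (k + 1) < 1) :
    ∃ qt : ℕ → ℝ,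
      (∀ j ≤ N, 0 ≤ qt j ∧ qt j ≤ 1) ∧
      (∀ j, 1 ≤ j → j ≤ N → qt (j - 1) ≥ (((j : ℝ) - 1) / (j : ℝ)) * qt j) ∧
      (∑ j ∈ Finset.range (N + 1), P j * qt j = ∑ j ∈ Finset.range (N + 1), P j * q j) ∧
      (∑ j ∈ Finset.range (N + 1), P j * qt j * v j >
        ∑ j ∈ Finset.range (N + 1), P j * q j * v j) := by
  have hkN : k + 1 ≤ N := by omega
  have hPk := hP k (by omega)
  have hPk1 := hP (k + 1) hkN
  obtain ⟨ε, hε, hle_one, hslack⟩ :=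
    exists_pos_add_le_one_and_mul_le (c := P (k + 1) / P k) hgap hlt
  set qt := transfer q k (P (k + 1) / P k * ε) ε
  have hge : ∀ j ≠ k, q j ≤ qt j := fun j hj ↦ le_transfer hε.le hj
  have hle : ∀ j ≠ k + 1, qt j ≤ q j := fun j hj ↦ transfer_le (by positivity) hj
  have hslack' : (k : ℝ) / ((k : ℝ) + 1) * qt (k + 1) ≤ qt k := by simpa [qt] using hslack
  have hmass : P k * (P (k + 1) / P k * ε) = P (k + 1) * ε := by field_simp
  refine ⟨qt, fun j hj ↦ ⟨?_, ?_⟩, SatisfiesChain.of_le_of_le hchain hge hle hslack', ?_, ?_⟩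
  · obtain rfl | hjk := eq_or_ne j k
    · have hqt_succ : 0 ≤ qt (j + 1) := (hq01 (j + 1) hkN).1.trans (hge (j + 1) (by omega))
      exact (mul_nonneg (by positivity) hqt_succ).trans hslack'
    · exact (hq01 j hj).1.trans (hge j hjk)
  · obtain rfl | hjk := eq_or_ne j (k + 1)
    · simpa [qt] using hle_one
    · exact (hle j hjk).trans (hq01 j hj).2
  · rw [sum_mul_transfer hkN, hmass]
    ring
  · simp_rw [mul_right_comm (P _) (qt _) (v _), mul_right_comm (P _) (q _) (v _)]
    rw [sum_mul_transfer hkN]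
    have hgain : 0 < P (k + 1) * ε * (v (k + 1) - v k) :=
      mul_pos (mul_pos hPk1 hε) (sub_pos.mpr (hv k (by omega)))
    linear_combination hgain + v k * hmass

/-- Pareto perturbation. If q ∈ Q has a slack constraint at k with
q_{k+1} < 1, then there is q̃ ∈ Q with the same π-expected buying probability and a
strictly higher π-expected consumption utility. -/
theorem stmt10 (N : ℕ) (hN : 2 ≤ N) (P v q : ℕ → ℝ)
    (hP : ∀ j ≤ N, 0 < P j)
    (hv0 : 0 ≤ v 0) (hv : ∀ j < N, v j < v (j + 1))
    (hq01 : ∀ j ≤ N, 0 ≤ q j ∧ q j ≤ 1)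
    (hchain : ∀ j, 1 ≤ j → j ≤ N → q (j - 1) ≥ (((j : ℝ) - 1) / (j : ℝ)) * q j)
    (k : ℕ) (hk : k ≤ N - 1)
    (hgap : q k > ((k : ℝ) / ((k : ℝ) + 1)) * q (k + 1)) (hlt : q (k + 1) < 1) :
    ∃ qt : ℕ → ℝ,
      (∀ j ≤ N, 0 ≤ qt j ∧ qt j ≤ 1) ∧
      (∀ j, 1 ≤ j → j ≤ N → qt (j - 1) ≥ (((j : ℝ) - 1) / (j : ℝ)) * qt j) ∧
      (∑ j ∈ Finset.range (N + 1), P j * qt j = ∑ j ∈ Finset.range (N + 1), P j * q j) ∧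
      (∑ j ∈ Finset.range (N + 1), P j * qt j * v j >
        ∑ j ∈ Finset.range (N + 1), P j * q j * v j) :=
  stmt10_general N hN P v q hP hv hq01 hchain k hk hgap hlt
end

section
/- Let N ≥ 2 and Q = { q ∈ [0,1]^{N+1} : q_{j-1} ≥ ((j-1)/j) q_j, j = 1,...,N }. Define q^0 = 1 (all-ones), q^k_j = min(j,k)/k for 1 ≤ k ≤ N, and q^{N+1} = 0. Let Q' be the set of q ∈ Q for which there exists k ∈ {0,...,N−1} with q_k > (k/(k+1)) q_{k+1} and q_{k+1} < 1. Then the union of line segments ⋃_{k=0}^{N} [q^k, q^{k+1}] equals Q \ Q'. -/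
/-!
If `q ∈ Q \ Q'` and `q_{k+1} < 1`, the constraint at `k` is tight. Going up from `j = 1` this
forces `q_j = min (j q_1, 1)`, and `q_0 = 0` unless `q_1 = 1`. So `Q \ Q'` consists of the
clipped linear vectors `(min (j c, 1))_j` with `c ≥ 0` and of the vectors `(t, 1, …, 1)`.
On the other side `q^k = (min (j / k, 1))_j` for `1 ≤ k ≤ N` and `q^{N+1}` is the case `c = 0`.
For `c` between `1 / (k + 1)` and `1 / k` no `j c` crosses `1`, so `c ↦ (min (j c, 1))_j` is
affine there and `[q^k, q^{k+1}]` is the image of that interval, while `[q^0, q^1]` is the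
family `(t, 1, …, 1)`.
-/
/-- Top-k buying probability vectors in [0,1]^{N+1}: q^0 = all-ones,
q^k_j = min(j,k)/k for 1 ≤ k ≤ N, and q^{N+1} = 0. -/
noncomputable def qv (N k : ℕ) : Fin (N + 1) → ℝ := fun j =>
  if k = 0 then 1 else if k = N + 1 then 0 else ((min (j : ℕ) k : ℕ) : ℝ) / (k : ℝ)

/-- The polytope Q of buying probability vectors. -/
def Qset (N : ℕ) : Set (Fin (N + 1) → ℝ) :=
  {q | (∀ j, 0 ≤ q j ∧ q j ≤ 1) ∧
    ∀ i : ℕ, ∀ hi : i < N,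
      q ⟨i, by omega⟩ ≥ ((i : ℝ) / ((i : ℝ) + 1)) * q ⟨i + 1, by omega⟩}

/-- The set Q' of vectors in Q with a slack constraint at some k with q_{k+1} < 1. -/
def Qprime (N : ℕ) : Set (Fin (N + 1) → ℝ) :=
  {q | q ∈ Qset N ∧
    ∃ k : ℕ, ∃ hk : k < N,
      q ⟨k, by omega⟩ > ((k : ℝ) / ((k : ℝ) + 1)) * q ⟨k + 1, by omega⟩ ∧
      q ⟨k + 1, by omega⟩ < 1}

open Set

noncomputable def clippedLinear (N : ℕ) (c : ℝ) : Fin (N + 1) → ℝ :=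
  fun j => min ((j : ℝ) * c) 1

lemma smul_min_one_add_smul_min_one {x y s t : ℝ} (hs : 0 ≤ s) (ht : 0 ≤ t) (hst : s + t = 1)
    (h : (x ≤ 1 ∧ y ≤ 1) ∨ (1 ≤ x ∧ 1 ≤ y)) :
    s * min x 1 + t * min y 1 = min (s * x + t * y) 1 := by
  rcases h with ⟨hx, hy⟩ | ⟨hx, hy⟩
  · rw [min_eq_left hx, min_eq_left hy, min_eq_left (by nlinarith)]
  · rw [min_eq_right hx, min_eq_right hy, min_eq_right (by nlinarith)]
    linarith

lemma segment_clippedLinear {N : ℕ} {a b : ℝ}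
    (h : ∀ j : Fin (N + 1),
      ((j : ℝ) * a ≤ 1 ∧ (j : ℝ) * b ≤ 1) ∨ (1 ≤ (j : ℝ) * a ∧ 1 ≤ (j : ℝ) * b)) :
    segment ℝ (clippedLinear N a) (clippedLinear N b) = clippedLinear N '' segment ℝ a b := by
  have key : ∀ s t : ℝ, 0 ≤ s → 0 ≤ t → s + t = 1 →
      s • clippedLinear N a + t • clippedLinear N b = clippedLinear N (s * a + t * b) := by
    intro s t hs ht hst
    funext j
    simp only [Pi.add_apply, Pi.smul_apply, smul_eq_mul, clippedLinear]
    rw [smul_min_one_add_smul_min_one hs ht hst (h j)]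
    ring_nf
  ext q
  constructor
  · rintro ⟨s, t, hs, ht, hst, rfl⟩
    exact ⟨s * a + t * b, ⟨s, t, hs, ht, hst, rfl⟩, (key s t hs ht hst).symm⟩
  · rintro ⟨_, ⟨s, t, hs, ht, hst, rfl⟩, rfl⟩
    exact ⟨s, t, hs, ht, hst, key s t hs ht hst⟩

lemma qv_zero (N : ℕ) : qv N 0 = 1 := by
  funext j
  simp [qv]

lemma qv_eq_clippedLinear {N k : ℕ} (hk : 1 ≤ k) (hkN : k ≤ N) :
    qv N k = clippedLinear N (k : ℝ)⁻¹ := by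
  have hk0 : (0 : ℝ) < k := by exact_mod_cast hk
  funext j
  simp only [qv, clippedLinear, if_neg (show k ≠ 0 by omega), if_neg (show k ≠ N + 1 by omega),
    Nat.cast_min, ← min_div_div_right hk0.le, div_self hk0.ne', div_eq_mul_inv]

lemma qv_self_add_one (N : ℕ) : qv N (N + 1) = clippedLinear N 0 := by
  funext j
  simp [qv, clippedLinear]

lemma mem_segment_qv_zero_one_iff {N : ℕ} (hN : 1 ≤ N) {q : Fin (N + 1) → ℝ} :
    q ∈ segment ℝ (qv N 0) (qv N 1) ↔ q 0 ∈ Icc 0 1 ∧ ∀ j : Fin (N + 1), j ≠ 0 → q j = 1 := by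
  have h1 : ∀ j : Fin (N + 1), qv N 1 j = if j = 0 then 0 else 1 := by
    intro j
    rw [qv_eq_clippedLinear le_rfl hN]
    split_ifs with hj
    · simp [clippedLinear, hj]
    · have : (1 : ℝ) ≤ (j : ℕ) := by
        exact_mod_cast Nat.one_le_iff_ne_zero.mpr (Fin.val_ne_zero_iff.mpr hj)
      simp [clippedLinear, this]
  constructor
  · rintro ⟨s, t, hs, ht, hst, rfl⟩
    refine ⟨?_, fun j hj => ?_⟩
    · simp only [Pi.add_apply, Pi.smul_apply, smul_eq_mul, qv_zero, Pi.one_apply, h1, if_true]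
      constructor <;> linarith
    · simp only [Pi.add_apply, Pi.smul_apply, smul_eq_mul, qv_zero, Pi.one_apply, h1,
        if_neg hj]
      linarith
  · rintro ⟨⟨h0, h0'⟩, hq⟩
    refine ⟨q 0, 1 - q 0, h0, by linarith, by ring, funext fun j => ?_⟩
    simp only [Pi.add_apply, Pi.smul_apply, smul_eq_mul, qv_zero, Pi.one_apply, h1]
    split_ifs with hj
    · subst hj; ring
    · rw [hq j hj]; ring

lemma segment_qv_eq_image {N k : ℕ} (hk : 1 ≤ k) (hkN : k ≤ N) :
    segment ℝ (qv N k) (qv N (k + 1)) =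
      clippedLinear N '' {c | 0 ≤ c ∧ k * c ≤ 1 ∧ (k < N → 1 ≤ (k + 1) * c)} := by
  have hk0 : (0 : ℝ) < k := by exact_mod_cast hk
  rcases hkN.lt_or_eq with hkN | rfl
  · have hk1 : (0 : ℝ) < k + 1 := by positivity
    rw [qv_eq_clippedLinear hk hkN.le, qv_eq_clippedLinear (by omega) hkN, Nat.cast_succ,
      segment_clippedLinear, segment_symm, segment_eq_Icc (by gcongr; simp)]
    · congr 1
      ext c
      simp only [mem_Icc, mem_ofPred_eq, hkN, forall_const]
      rw [inv_le_iff_one_le_mul₀' hk1, ← one_div, le_div_iff₀' hk0]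
      constructor
      · rintro ⟨h1, h2⟩
        exact ⟨by nlinarith, h2, h1⟩
      · rintro ⟨-, h2, h1⟩
        exact ⟨h1, h2⟩
    · intro j
      simp only [mul_inv_le_iff₀ hk0, mul_inv_le_iff₀ hk1, le_mul_inv_iff₀ hk0,
        le_mul_inv_iff₀ hk1, one_mul]
      exact_mod_cast (by omega :
        ((j : ℕ) ≤ k ∧ (j : ℕ) ≤ k + 1) ∨ (k ≤ (j : ℕ) ∧ k + 1 ≤ (j : ℕ)))
  · rw [qv_eq_clippedLinear hk le_rfl, qv_self_add_one, segment_clippedLinear, segment_symm,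
      segment_eq_Icc (by positivity)]
    · congr 1
      ext c
      simp only [mem_Icc, mem_ofPred_eq, lt_irrefl, IsEmpty.forall_iff, and_true]
      rw [← one_div, le_div_iff₀' hk0]
    · intro j
      left
      rw [mul_inv_le_iff₀ hk0, one_mul, mul_zero]
      exact ⟨by exact_mod_cast j.is_le, zero_le_one⟩

lemma clippedLinear_mem_Qset_diff_Qprime {N : ℕ} {c : ℝ} (hc : 0 ≤ c) :
    clippedLinear N c ∈ Qset N \ Qprime N := by
  have hQ : clippedLinear N c ∈ Qset N := by
    refine ⟨fun j => ⟨le_min (by positivity) zero_le_one, min_le_right _ _⟩, fun i hi => ?_⟩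
    have hi0 : (0 : ℝ) ≤ i := i.cast_nonneg
    have hfrac : (i : ℝ) / (i + 1) ≤ 1 := div_le_one_of_le₀ (by linarith) (by positivity)
    simp only [clippedLinear, Nat.cast_succ, ge_iff_le]
    refine le_min ?_ ?_
    · calc (i : ℝ) / (i + 1) * min ((i + 1) * c) 1 ≤ i / (i + 1) * ((i + 1) * c) := by
            gcongr; exact min_le_left _ _
        _ = i * c := by field_simp
    · calc (i : ℝ) / (i + 1) * min ((i + 1) * c) 1 ≤ 1 * 1 := by
            gcongr; exact min_le_right _ _
        _ = 1 := one_mul 1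
  refine ⟨hQ, ?_⟩
  rintro ⟨-, k, hk, hslack, hlt⟩
  simp only [clippedLinear, Nat.cast_succ] at hslack hlt
  have hk0 : (0 : ℝ) ≤ k := k.cast_nonneg
  have hlt' : ((k : ℝ) + 1) * c < 1 := by simpa using hlt
  rw [min_eq_left hlt'.le, min_eq_left (by nlinarith)] at hslack
  have : (k : ℝ) / (k + 1) * ((k + 1) * c) = k * c := by field_simp
  exact hslack.ne this

lemma mem_Qset_diff_Qprime_of_eq_one {N : ℕ} {q : Fin (N + 1) → ℝ} (h0 : q 0 ∈ Icc 0 1)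
    (hq : ∀ j : Fin (N + 1), j ≠ 0 → q j = 1) : q ∈ Qset N \ Qprime N := by
  have hsucc (i : ℕ) (hi : i < N) : q ⟨i + 1, by omega⟩ = 1 :=
    hq _ (Fin.ne_of_val_ne i.succ_ne_zero)
  refine ⟨⟨fun j => ?_, fun i hi => ?_⟩,
    fun ⟨_, k, hk, _, hlt⟩ => (hsucc k hk).not_lt hlt⟩
  · rcases eq_or_ne j 0 with rfl | hj
    · exact h0
    · simp [hq j hj]
  · rw [hsucc i hi, mul_one]
    rcases Nat.eq_zero_or_pos i with rfl | hi0
    · simpa using h0.1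
    · rw [hq _ (Fin.ne_of_val_ne hi0.ne')]
      exact div_le_one_of_le₀ (by linarith) (by positivity)

lemma eq_min_succ_mul_of_tight {j c x y : ℝ} (hj : 0 < j) (hx : x = min (j * c) 1) (hy : y ≤ 1)
    (hxy : j / (j + 1) * y ≤ x) (htight : y < 1 → x = j / (j + 1) * y) :
    y = min ((j + 1) * c) 1 := by
  have hj1 : 0 < j + 1 := by linarith
  have hxjc : x ≤ j * c := hx ▸ min_le_left _ _
  rcases hy.lt_or_eq with hy | rfl
  · have hx' : (j + 1) * x = j * y := by
      rw [htight hy]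
      field_simp
    have hxc : x = j * c := by
      have hx1 : x < 1 := by nlinarith
      rw [hx] at hx1 ⊢
      exact min_eq_left (min_lt_iff.mp hx1 |>.resolve_right (lt_irrefl 1)).le
    have hyc : y = (j + 1) * c := by
      rw [hxc] at hx'
      exact mul_left_cancel₀ hj.ne' (by linarith)
    rw [hyc, min_eq_left (hyc ▸ hy.le)]
  · rw [mul_one, div_le_iff₀ hj1] at hxy
    have : j * 1 ≤ j * ((j + 1) * c) := by nlinarith
    rw [min_eq_right (le_of_mul_le_mul_left this hj)]

lemma eq_mul_of_mem_Qset_diff_Qprime {N k : ℕ} {q : Fin (N + 1) → ℝ}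
    (hq : q ∈ Qset N \ Qprime N) (hk : k < N) (hlt : q ⟨k + 1, by omega⟩ < 1) :
    q ⟨k, by omega⟩ = k / (k + 1) * q ⟨k + 1, by omega⟩ :=
  ((hq.1.2 k hk).eq_of_not_lt fun hslack => hq.2 ⟨hq.1, k, hk, hslack, hlt⟩).symm

lemma eq_min_mul_of_mem_Qset_diff_Qprime {N : ℕ} (hN : 1 ≤ N) {q : Fin (N + 1) → ℝ}
    (hq : q ∈ Qset N \ Qprime N) :
    ∀ j (hj : j ≤ N), 1 ≤ j → q ⟨j, by omega⟩ = min (j * q ⟨1, by omega⟩) 1 := by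
  intro j
  induction j with
  | zero => intro _ h; omega
  | succ j ih =>
    intro hj _
    rcases Nat.eq_zero_or_pos j with rfl | hj0
    · simp [(hq.1.1 _).2]
    · push_cast
      exact eq_min_succ_mul_of_tight (by exact_mod_cast hj0) (ih (by omega) hj0) (hq.1.1 _).2
        (hq.1.2 j (by omega)) (eq_mul_of_mem_Qset_diff_Qprime hq (by omega))

lemma eq_clippedLinear_of_mem_Qset_diff_Qprime {N : ℕ} (hN : 1 ≤ N) {q : Fin (N + 1) → ℝ}
    (hq : q ∈ Qset N \ Qprime N) (hlt : q ⟨1, by omega⟩ < 1) :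
    q = clippedLinear N (q ⟨1, by omega⟩) := by
  funext j
  rcases Nat.eq_zero_or_pos j with hj | hj
  · have hq0 := eq_mul_of_mem_Qset_diff_Qprime hq hN hlt
    simp only [Nat.cast_zero, zero_div, zero_mul] at hq0
    obtain rfl : j = 0 := Fin.ext hj
    simp [clippedLinear, Fin.mk_zero ▸ hq0]
  · exact eq_min_mul_of_mem_Qset_diff_Qprime hN hq j j.is_le hj

lemma eq_one_of_mem_Qset_diff_Qprime {N : ℕ} (hN : 1 ≤ N) {q : Fin (N + 1) → ℝ}
    (hq : q ∈ Qset N \ Qprime N) (h1 : q ⟨1, by omega⟩ = 1) (j : Fin (N + 1)) (hj : j ≠ 0) :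
    q j = 1 := by
  have hj1 : (1 : ℝ) ≤ (j : ℕ) := by
    exact_mod_cast Nat.one_le_iff_ne_zero.mpr (Fin.val_ne_zero_iff.mpr hj)
  have hqj : q j = _ :=
    eq_min_mul_of_mem_Qset_diff_Qprime hN hq j j.is_le (by exact_mod_cast hj1)
  rw [hqj, h1, mul_one, min_eq_right hj1]

lemma exists_mul_le_one_le_succ_mul (N : ℕ) (hN : 1 ≤ N) {c : ℝ} (hc : c ≤ 1) :
    ∃ k : ℕ, 1 ≤ k ∧ k ≤ N ∧ k * c ≤ 1 ∧ (k < N → 1 ≤ (k + 1) * c) := by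
  let P : ℕ → Prop := fun k => (k : ℝ) * c ≤ 1
  have hP1 : P 1 := by simpa [P] using hc
  refine ⟨Nat.findGreatest P N, Nat.le_findGreatest hN hP1, Nat.findGreatest_le N,
    Nat.findGreatest_spec hN hP1, fun hk => ?_⟩
  have := Nat.findGreatest_is_greatest (Nat.lt_succ_self _) hk
  simp only [P, not_le, Nat.cast_succ] at this
  exact this.le

/-- ⋃_{k=0}^{N} [q^k, q^{k+1}] = Q \ Q'. -/
theorem stmt11 (N : ℕ) (hN : 2 ≤ N) :
    (⋃ k ∈ Finset.range (N + 1), segment ℝ (qv N k) (qv N (k + 1))) = Qset N \ Qprime N := by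
  ext q
  simp only [Set.mem_iUnion, Finset.mem_range, exists_prop]
  constructor
  · rintro ⟨k, hk, hq⟩
    rcases Nat.eq_zero_or_pos k with rfl | hk1
    · obtain ⟨h0, h1⟩ := (mem_segment_qv_zero_one_iff (by omega)).1 hq
      exact mem_Qset_diff_Qprime_of_eq_one h0 h1
    · rw [segment_qv_eq_image hk1 (by omega)] at hq
      obtain ⟨c, hc, rfl⟩ := hq
      exact clippedLinear_mem_Qset_diff_Qprime hc.1
  · intro hq
    rcases (hq.1.1 ⟨1, by omega⟩).2.lt_or_eq with hlt | heq
    · obtain ⟨k, hk1, hkN, hkc⟩ := exists_mul_le_one_le_succ_mul N (by omega) hlt.le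
      refine ⟨k, by omega, ?_⟩
      rw [segment_qv_eq_image hk1 hkN, eq_clippedLinear_of_mem_Qset_diff_Qprime (by omega) hq hlt]
      exact mem_image_of_mem _ ⟨(hq.1.1 _).1, hkc⟩
    · exact ⟨0, by omega, (mem_segment_qv_zero_one_iff (by omega)).2
        ⟨hq.1.1 0, eq_one_of_mem_Qset_diff_Qprime (by omega) hq heq⟩⟩
end

section
/- Let N ≥ 2, let π_0,...,π_N > 0, and 0 ≤ v_0 < ... < v_N. Suppose p satisfies u_k(p) < 0 for all k = 0,...,N, where u_k(p) = Σ_j π_j Δ^k_j (v_j − p) with Δ^0 = (1,0,...,0) and Δ^k_j = (j/k)𝟙[j≤k]. Then the only q ∈ [0,1]^{N+1} satisfying both the chain constraints q_{j-1} ≥ ((j-1)/j) q_j (j = 1,...,N) and Σ_j π_j q_j (v_j − p) ≥ 0 is q = 0. -/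
/-- if u_k(p) < 0 for all k = 0,...,N, then the only q ∈ [0,1]^{N+1}
satisfying the chain constraints and Σ_j π_j q_j (v_j − p) ≥ 0 is q = 0. -/
theorem stmt13 (N : ℕ) (hN : 2 ≤ N) (P v : ℕ → ℝ) (p : ℝ)
    (hP : ∀ j ≤ N, 0 < P j)
    (hv0 : 0 ≤ v 0) (hv : ∀ j < N, v j < v (j + 1))
    (hu : ∀ k ≤ N, ∑ j ∈ Finset.range (N + 1), P j * Delta k j * (v j - p) < 0)
    (q : ℕ → ℝ)
    (hq01 : ∀ j ≤ N, 0 ≤ q j ∧ q j ≤ 1)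
    (hchain : ∀ j, 1 ≤ j → j ≤ N → q (j - 1) ≥ (((j : ℝ) - 1) / (j : ℝ)) * q j)
    (hpos : 0 ≤ ∑ j ∈ Finset.range (N + 1), P j * q j * (v j - p)) :
    ∀ j ≤ N, q j = 0 := by
  classical
  set c : ℕ → ℝ := fun k => if k < N then q k - ((k : ℝ) / ((k : ℝ) + 1)) * q (k + 1) else q k
    with hc
  -- chain constraint rewritten
  have hchain' : ∀ k, k < N → q k ≥ ((k : ℝ) / ((k : ℝ) + 1)) * q (k + 1) := by
    intro k hk
    have := hchain (k + 1) (Nat.le_add_left 1 k) (by omega)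
    simpa [Nat.add_sub_cancel] using this
  have hcnonneg : ∀ k ≤ N, 0 ≤ c k := by
    intro k hk
    by_cases h : k < N
    · simp only [hc, if_pos h]
      have := hchain' k h
      linarith
    · simp only [hc, if_neg h]
      exact (hq01 k hk).1
  -- key: ∑_{k ∈ range (N+1)} c k * Delta k j = q j for j ≤ N
  have hkey : ∀ j ≤ N, ∑ k ∈ Finset.range (N + 1), c k * Delta k j = q j := by
    intro j hj
    rcases Nat.eq_zero_or_pos j with rfl | hj1
    · have : ∀ k ∈ Finset.range (N + 1), c k * Delta k 0 = if k = 0 then c 0 else 0 := by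
        intro k _
        rcases Nat.eq_zero_or_pos k with rfl | hk1
        · simp [Delta]
        · have hk0 : k ≠ 0 := by omega
          simp [Delta, hk0]
      rw [Finset.sum_congr rfl this, Finset.sum_ite_eq' (Finset.range (N + 1)) 0 (fun _ => c 0)]
      have h0N : 0 < N := by omega
      simp [hc, h0N]
    · -- j ≥ 1: terms vanish for k < j
      have hsub : Finset.Ico j (N + 1) ⊆ Finset.range (N + 1) := by
        intro k hk; simp only [Finset.mem_Ico] at hk; simp [Finset.mem_range]; omega
      have hzero : ∀ k ∈ Finset.range (N + 1), k ∉ Finset.Ico j (N + 1) →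
          c k * Delta k j = 0 := by
        intro k hk hk'
        simp only [Finset.mem_range] at hk
        simp only [Finset.mem_Ico] at hk'
        have hkj : k < j := by omega
        rcases Nat.eq_zero_or_pos k with rfl | hk1
        · have : j ≠ 0 := by omega
          simp [Delta, this]
        · have hk0 : k ≠ 0 := by omega
          have : ¬ j ≤ k := by omega
          simp [Delta, hk0, this]
      rw [← Finset.sum_subset hsub hzero]
      -- now the telescoping sum over Ico j (N+1)
      have hjk : ∀ k ∈ Finset.Ico j (N + 1), c k * Delta k j =
          (j : ℝ) * (c k / (k : ℝ)) := by
        intro k hk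
        simp only [Finset.mem_Ico] at hk
        have hk0 : k ≠ 0 := by omega
        have hjk : j ≤ k := hk.1
        simp only [Delta, if_neg hk0, if_pos hjk]
        field_simp
      rw [Finset.sum_congr rfl hjk, ← Finset.mul_sum]
      have htel : ∑ k ∈ Finset.Ico j (N + 1), c k / (k : ℝ) = q j / (j : ℝ) := by
        have hstep : ∀ k ∈ Finset.Ico j N, c k / (k : ℝ) =
            q k / (k : ℝ) - q (k + 1) / ((k : ℝ) + 1) := by
          intro k hk
          simp only [Finset.mem_Ico] at hk
          have hk0 : (k : ℝ) ≠ 0 := by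
            have : k ≠ 0 := by omega
            exact_mod_cast this
          have hk1 : (k : ℝ) + 1 ≠ 0 := by positivity
          have hck : c k = (q k * ((k : ℝ) + 1) - (k : ℝ) * q (k + 1)) / ((k : ℝ) + 1) := by
            simp only [hc, if_pos hk.2]
            field_simp
          rw [hck, div_div, div_sub_div _ _ hk0 hk1, mul_comm ((k : ℝ) + 1) (k : ℝ)]
        have hNle : j ≤ N := hj
        rw [Finset.sum_Ico_succ_top hNle]
        rw [Finset.sum_congr rfl hstep]
        have : ∑ k ∈ Finset.Ico j N, (q k / (k : ℝ) - q (k + 1) / ((k : ℝ) + 1)) =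
            q j / (j : ℝ) - q N / (N : ℝ) := by
          have := Finset.sum_Ico_eq_sub (fun k => -(q k / (k : ℝ))) hNle
          rw [Finset.sum_Ico_eq_sub _ hNle]
          have hr : ∀ n : ℕ, ∑ k ∈ Finset.range n,
              (q k / (k : ℝ) - q (k + 1) / ((k : ℝ) + 1)) =
              -(∑ k ∈ Finset.range n, (q (k + 1) / ((k + 1 : ℕ) : ℝ) - q k / ((k : ℕ) : ℝ))) := by
            intro n
            rw [← Finset.sum_neg_distrib]
            apply Finset.sum_congr rfl
            intro k _
            push_cast
            ring
          rw [hr, hr, Finset.sum_range_sub (fun k => q k / (k : ℝ)),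
            Finset.sum_range_sub (fun k => q k / (k : ℝ))]
          ring
        rw [this]
        have hNN : ¬ (N < N) := lt_irrefl N
        simp only [hc, if_neg hNN]
        push_cast
        ring
      rw [htel]
      have hj0 : (j : ℝ) ≠ 0 := by
        have : j ≠ 0 := by omega
        exact_mod_cast this
      field_simp
  -- decomposition of the objective
  have hdecomp : ∑ k ∈ Finset.range (N + 1), c k *
      (∑ j ∈ Finset.range (N + 1), P j * Delta k j * (v j - p)) =
      ∑ j ∈ Finset.range (N + 1), P j * q j * (v j - p) := by
    simp_rw [Finset.mul_sum]
    rw [Finset.sum_comm]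
    apply Finset.sum_congr rfl
    intro j hj
    simp only [Finset.mem_range] at hj
    have hjN : j ≤ N := by omega
    have hterm : ∀ k, c k * (P j * Delta k j * (v j - p)) =
        (P j * (v j - p)) * (c k * Delta k j) := by intro k; ring
    simp_rw [hterm, ← Finset.mul_sum, hkey j hjN]
    ring
  -- each term is ≤ 0, sum ≥ 0 ⇒ each c k = 0
  have hterm_nonpos : ∀ k ∈ Finset.range (N + 1),
      c k * (∑ j ∈ Finset.range (N + 1), P j * Delta k j * (v j - p)) ≤ 0 := by
    intro k hk
    simp only [Finset.mem_range] at hk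
    have hkN : k ≤ N := by omega
    exact mul_nonpos_of_nonneg_of_nonpos (hcnonneg k hkN) (le_of_lt (hu k hkN))
  have hsum0 : ∑ k ∈ Finset.range (N + 1), c k *
      (∑ j ∈ Finset.range (N + 1), P j * Delta k j * (v j - p)) = 0 := by
    have h1 : ∑ k ∈ Finset.range (N + 1), c k *
        (∑ j ∈ Finset.range (N + 1), P j * Delta k j * (v j - p)) ≤ 0 :=
      Finset.sum_nonpos hterm_nonpos
    have h2 := hdecomp
    linarith [hpos, h2 ▸ h1]
  have hc0 : ∀ k ≤ N, c k = 0 := by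
    intro k hk
    have := (Finset.sum_eq_zero_iff_of_nonpos hterm_nonpos).mp hsum0 k
      (Finset.mem_range.mpr (by omega))
    rcases mul_eq_zero.mp this with h | h
    · exact h
    · exact absurd h (ne_of_lt (hu k hk))
  -- downward induction: q (N - d) = 0 for all d ≤ N
  have hdown : ∀ d, d ≤ N → q (N - d) = 0 := by
    intro d
    induction d with
    | zero =>
      intro _
      have := hc0 N le_rfl
      simpa [hc, lt_irrefl] using this
    | succ d ih =>
      intro hd
      have hlt : N - (d + 1) < N := by omega
      have hcd := hc0 (N - (d + 1)) (by omega)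
      simp only [hc, if_pos hlt] at hcd
      have hsucc : N - (d + 1) + 1 = N - d := by omega
      rw [hsucc] at hcd
      rw [ih (by omega)] at hcd
      linarith
  intro j hj
  have : j = N - (N - j) := by omega
  rw [this]
  exact hdown (N - j) (by omega)
end

section
/- Let N ≥ 2, π_0,...,π_N > 0, 0 ≤ v_0 < ... < v_N, and suppose u_N(p) = 0 while u_k(p) < 0 for k = 0,...,N−1 (with u_k as above). Then for q ∈ [0,1]^{N+1} satisfying q_{j-1} ≥ ((j-1)/j) q_j for all j, the receiver utility Σ_j π_j q_j (v_j − p) ≥ 0 holds if and only if q = λ q^N for some λ ∈ [0,1], where q^N_j = j/N. -/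
lemma telesc (g : ℕ → ℝ) (m : ℕ) : ∀ n, m ≤ n →
    ∑ k ∈ Finset.Ico m n, (g k - g (k+1)) = g m - g n := by
  intro n hn
  induction n, hn using Nat.le_induction with
  | base => simp
  | succ n hn ih =>
    rw [Finset.sum_Ico_succ_top hn, ih]
    ring

/-- if u_N(p) = 0 and u_k(p) < 0 for k < N, then for q ∈ Q the
receiver's utility is nonnegative iff q = λ q^N for some λ ∈ [0,1]. -/
theorem stmt14 (N : ℕ) (hN : 2 ≤ N) (P v : ℕ → ℝ) (p : ℝ)
    (hP : ∀ j ≤ N, 0 < P j)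
    (hv0 : 0 ≤ v 0) (hv : ∀ j < N, v j < v (j + 1))
    (huN : ∑ j ∈ Finset.range (N + 1), P j * Delta N j * (v j - p) = 0)
    (huk : ∀ k < N, ∑ j ∈ Finset.range (N + 1), P j * Delta k j * (v j - p) < 0)
    (q : ℕ → ℝ)
    (hq01 : ∀ j ≤ N, 0 ≤ q j ∧ q j ≤ 1)
    (hchain : ∀ j, 1 ≤ j → j ≤ N → q (j - 1) ≥ (((j : ℝ) - 1) / (j : ℝ)) * q j) :
    0 ≤ ∑ j ∈ Finset.range (N + 1), P j * q j * (v j - p) ↔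
      ∃ lam : ℝ, 0 ≤ lam ∧ lam ≤ 1 ∧ ∀ j ≤ N, q j = lam * ((j : ℝ) / (N : ℝ)) := by
  have hNne : N ≠ 0 := by omega
  have hNR : (N : ℝ) ≠ 0 := Nat.cast_ne_zero.mpr hNne
  -- the coefficients c
  set c : ℕ → ℝ := fun k => if k = N then q N else if k = 0 then q 0
      else q k - ((k : ℝ) / ((k : ℝ) + 1)) * q (k + 1) with hc
  have hcN : c N = q N := by simp [hc]
  -- nonnegativity of c
  have hcnn : ∀ k ≤ N, 0 ≤ c k := by
    intro k hk
    by_cases hkN : k = N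
    · rw [hkN, hcN]
      exact (hq01 N le_rfl).1
    by_cases hk0 : k = 0
    · simp only [hc, hk0]
      simp only [if_neg (by omega : (0:ℕ) ≠ N), if_pos rfl]
      exact (hq01 0 (by omega)).1
    · have h := hchain (k + 1) (by omega) (by omega)
      simp only [Nat.add_sub_cancel] at h
      have e : ((k : ℝ) + 1 - 1) = (k : ℝ) := by ring
      push_cast at h
      rw [e] at h
      simp only [hc, if_neg hkN, if_neg hk0]
      linarith
  -- pointwise decomposition
  have hpoint : ∀ j ≤ N, ∑ k ∈ Finset.range (N + 1), c k * Delta k j = q j := by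
    intro j hj
    by_cases hj0 : j = 0
    · subst hj0
      rw [Finset.sum_eq_single 0]
      · have hD : Delta 0 0 = 1 := by simp [Delta]
        rw [hD, mul_one]
        simp only [hc]
        rw [if_neg (by omega : ¬ (0 = N))]
        simp
      · intro b _ hb
        simp [Delta, hb]
      · intro h
        exact absurd (Finset.mem_range.mpr (by omega)) h
    · have hj1 : 1 ≤ j := by omega
      have hjR : (j : ℝ) ≠ 0 := Nat.cast_ne_zero.mpr hj0
      rw [Finset.range_eq_Ico,
        ← Finset.sum_Ico_consecutive _ (Nat.zero_le j) (by omega : j ≤ N + 1)]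
      have h1 : ∑ k ∈ Finset.Ico 0 j, c k * Delta k j = 0 := by
        apply Finset.sum_eq_zero
        intro k hk
        have hk' : k < j := (Finset.mem_Ico.mp hk).2
        have : Delta k j = 0 := by
          unfold Delta
          rcases eq_or_ne k 0 with h | h
          · simp [h, hj0]
          · rw [if_neg h, if_neg (by omega : ¬ j ≤ k)]
        simp [this]
      rw [h1, zero_add]
      have h2 : ∑ k ∈ Finset.Ico j (N + 1), c k * Delta k j
          = ∑ k ∈ Finset.Ico j N, ((j:ℝ) * (q k / (k:ℝ) - q (k+1) / ((k:ℝ)+1)))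
            + c N * Delta N j := by
        rw [Finset.sum_Ico_succ_top (by omega : j ≤ N)]
        congr 1
        apply Finset.sum_congr rfl
        intro k hk
        have hk1 : j ≤ k := (Finset.mem_Ico.mp hk).1
        have hk2 : k < N := (Finset.mem_Ico.mp hk).2
        have hk0 : k ≠ 0 := by omega
        have hkR : (k : ℝ) ≠ 0 := Nat.cast_ne_zero.mpr hk0
        have hkR1 : (k : ℝ) + 1 ≠ 0 := by positivity
        have hD : Delta k j = (j : ℝ) / (k : ℝ) := by
          simp [Delta, hk0, (by omega : j ≤ k)]
        rw [hD]
        simp only [hc, if_neg (by omega : k ≠ N), if_neg hk0]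
        field_simp
      rw [h2, ← Finset.mul_sum]
      have h3 : ∑ k ∈ Finset.Ico j N, (q k / (k:ℝ) - q (k+1) / ((k:ℝ)+1))
          = q j / (j:ℝ) - q N / (N:ℝ) := by
        have := telesc (fun k => q k / (k : ℝ)) j N hj
        simpa using this
      have hDN : Delta N j = (j : ℝ) / (N : ℝ) := by
        simp [Delta, hNne, hj]
      rw [h3, hDN, hcN]
      field_simp
      ring
  -- swapping the sums
  have hswap : ∑ j ∈ Finset.range (N + 1), P j * q j * (v j - p)
      = ∑ k ∈ Finset.range (N + 1),
          c k * ∑ j ∈ Finset.range (N + 1), P j * Delta k j * (v j - p) := by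
    calc ∑ j ∈ Finset.range (N+1), P j * q j * (v j - p)
        = ∑ j ∈ Finset.range (N+1), ∑ k ∈ Finset.range (N+1),
            c k * (P j * Delta k j * (v j - p)) := by
          apply Finset.sum_congr rfl
          intro j hj
          have hj' : j ≤ N := by
            have := Finset.mem_range.mp hj; omega
          rw [← hpoint j hj', Finset.mul_sum, Finset.sum_mul]
          apply Finset.sum_congr rfl
          intro k _
          ring
      _ = ∑ k ∈ Finset.range (N+1), ∑ j ∈ Finset.range (N+1),
            c k * (P j * Delta k j * (v j - p)) := Finset.sum_comm
      _ = ∑ k ∈ Finset.range (N+1),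
            c k * ∑ j ∈ Finset.range (N+1), P j * Delta k j * (v j - p) := by
          apply Finset.sum_congr rfl
          intro k _
          rw [Finset.mul_sum]
  have hsplit : ∑ k ∈ Finset.range (N + 1),
        c k * ∑ j ∈ Finset.range (N + 1), P j * Delta k j * (v j - p)
      = ∑ k ∈ Finset.range N,
        c k * ∑ j ∈ Finset.range (N + 1), P j * Delta k j * (v j - p) := by
    rw [Finset.sum_range_succ, huN, mul_zero, add_zero]
  have hterm : ∀ k ∈ Finset.range N,
      c k * ∑ j ∈ Finset.range (N + 1), P j * Delta k j * (v j - p) ≤ 0 := by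
    intro k hk
    have hk' : k < N := Finset.mem_range.mp hk
    exact mul_nonpos_of_nonneg_of_nonpos (hcnn k (by omega)) (le_of_lt (huk k hk'))
  constructor
  · intro hU
    have hU' : 0 ≤ ∑ k ∈ Finset.range N,
        c k * ∑ j ∈ Finset.range (N + 1), P j * Delta k j * (v j - p) := by
      rw [← hsplit, ← hswap]; exact hU
    have hzero : ∑ k ∈ Finset.range N,
        c k * ∑ j ∈ Finset.range (N + 1), P j * Delta k j * (v j - p) = 0 :=
      le_antisymm (Finset.sum_nonpos hterm) hU'
    have hall := (Finset.sum_eq_zero_iff_of_nonpos hterm).mp hzero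
    have hc0 : ∀ k < N, c k = 0 := by
      intro k hk
      have h := hall k (Finset.mem_range.mpr hk)
      rcases mul_eq_zero.mp h with h | h
      · exact h
      · exact absurd h (ne_of_lt (huk k hk))
    refine ⟨q N, (hq01 N le_rfl).1, (hq01 N le_rfl).2, fun j hj => ?_⟩
    have hp := hpoint j hj
    rw [Finset.sum_range_succ] at hp
    have hz : ∑ k ∈ Finset.range N, c k * Delta k j = 0 :=
      Finset.sum_eq_zero fun k hk => by
        rw [hc0 k (Finset.mem_range.mp hk), zero_mul]
    rw [hz, zero_add, hcN] at hp
    have hDN : Delta N j = (j:ℝ)/(N:ℝ) := by simp [Delta, hNne, hj]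
    rw [hDN] at hp
    exact hp.symm
  · rintro ⟨lam, hl0, hl1, hlam⟩
    have heq : ∑ j ∈ Finset.range (N+1), P j * q j * (v j - p)
        = lam * ∑ j ∈ Finset.range (N+1), P j * Delta N j * (v j - p) := by
      rw [Finset.mul_sum]
      apply Finset.sum_congr rfl
      intro j hj
      have hj' : j ≤ N := by
        have := Finset.mem_range.mp hj; omega
      rw [hlam j hj']
      have hDN : Delta N j = (j:ℝ)/(N:ℝ) := by simp [Delta, hNne, hj']
      rw [hDN]; ring
    rw [heq, huN, mul_zero]
end

section
/- Let N ≥ 2, π_0,...,π_N > 0, 0 ≤ v_0 < ... < v_N, and p with u_N(p) > 0 and u_k(p) < 0 for k = 0,...,N−1. Then for q ∈ [0,1]^{N+1} with q_{j-1} ≥ ((j-1)/j) q_j for all j, the inequality Σ_j π_j q_j (v_j − p) ≥ u_N(p) holds if and only if q = q^N, i.e., q_j = j/N for all j. -/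
open Finset

lemma Delta_of_le {k j : ℕ} (hk : k ≠ 0) (h : j ≤ k) : Delta k j = j / k := by
  simp [Delta, hk, h]

lemma Delta_zero_right {k : ℕ} : Delta k 0 = if k = 0 then 1 else 0 := by
  by_cases hk : k = 0 <;> simp [Delta, hk]

/-- The paper's `u_k(p)` is `utility N P v p (Delta k)`. -/
noncomputable def utility (N : ℕ) (P v : ℕ → ℝ) (p : ℝ) (q : ℕ → ℝ) : ℝ :=
  ∑ j ∈ range (N + 1), P j * q j * (v j - p)

lemma utility_congr {N : ℕ} {P v : ℕ → ℝ} {p : ℝ} {q q' : ℕ → ℝ}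
    (h : ∀ j ≤ N, q j = q' j) : utility N P v p q = utility N P v p q' :=
  sum_congr rfl fun j hj => by rw [h j (Nat.lt_succ_iff.mp (mem_range.mp hj))]

lemma utility_eq_sum_of_eq_sum {N : ℕ} {P v : ℕ → ℝ} {p : ℝ} {q α : ℕ → ℝ}
    {D : ℕ → ℕ → ℝ} {s : Finset ℕ} (h : ∀ j ≤ N, q j = ∑ k ∈ s, α k * D k j) :
    utility N P v p q = ∑ k ∈ s, α k * utility N P v p (D k) := by
  rw [utility_congr h]
  simp only [utility, mul_sum, sum_mul]
  rw [sum_comm]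
  exact sum_congr rfl fun _ _ => sum_congr rfl fun _ _ => by ring

/-- The coordinates of `q` in the basis `Δ^0, …, Δ^N`. -/
noncomputable def deltaCoeff (N : ℕ) (q : ℕ → ℝ) (k : ℕ) : ℝ :=
  q k - if k < N then (k : ℝ) / (k + 1) * q (k + 1) else 0

lemma deltaCoeff_self (N : ℕ) (q : ℕ → ℝ) : deltaCoeff N q N = q N := by
  simp [deltaCoeff]

lemma deltaCoeff_nonneg {N : ℕ} {q : ℕ → ℝ} (hqN : 0 ≤ q N)
    (hchain : ∀ j, 1 ≤ j → j ≤ N → q (j - 1) ≥ (((j : ℝ) - 1) / (j : ℝ)) * q j)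
    {k : ℕ} (hk : k ≤ N) : 0 ≤ deltaCoeff N q k := by
  unfold deltaCoeff
  split_ifs with hkN
  · have h := hchain (k + 1) (by omega) (by omega)
    simp only [Nat.add_sub_cancel, Nat.cast_add, Nat.cast_one, add_sub_cancel_right] at h
    linarith
  · obtain rfl : k = N := by omega
    simpa using hqN

lemma sum_deltaCoeff_mul_Delta {N : ℕ} (q : ℕ → ℝ) {j : ℕ} (hj : j ≤ N) :
    ∑ k ∈ range (N + 1), deltaCoeff N q k * Delta k j = q j := by
  rcases Nat.eq_zero_or_pos j with rfl | hj0
  · rw [sum_eq_single_of_mem 0 (by simp)]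
    · simp [Delta_zero_right, deltaCoeff]
    · intro k _ hk
      simp [Delta_zero_right, hk]
  -- On `j ≤ k ≤ N`, `deltaCoeff N q k * Δ^k_j = j (r k - r (k+1))` telescopes.
  set r : ℕ → ℝ := fun k => if k ≤ N then q k / k else 0
  have hterm : ∀ k ∈ Ico j (N + 1),
      deltaCoeff N q k * Delta k j = j * (r k - r (k + 1)) := by
    intro k hk
    obtain ⟨hjk, hkN⟩ := mem_Ico.mp hk
    have hk0 : (k : ℝ) ≠ 0 := by norm_cast; omega
    rw [Delta_of_le (by omega) hjk]
    simp only [deltaCoeff, r, if_pos (Nat.lt_succ_iff.mp hkN)]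
    by_cases hkN' : k < N
    · rw [if_pos hkN', if_pos (by omega)]
      push_cast
      field_simp
    · rw [if_neg hkN', if_neg (by omega)]
      field_simp
      ring
  have hlow : ∑ k ∈ Ico 0 j, deltaCoeff N q k * Delta k j = 0 :=
    sum_eq_zero fun k hk => by rw [Delta_of_lt (mem_Ico.mp hk).2, mul_zero]
  rw [range_eq_Ico, ← sum_Ico_consecutive _ (Nat.zero_le j) (by omega : j ≤ N + 1), hlow,
    zero_add, sum_congr rfl hterm, ← mul_sum]
  have htele : ∑ k ∈ Ico j (N + 1), (r k - r (k + 1)) = r j - r (N + 1) := by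
    rw [← neg_sub, ← sum_Ico_sub r (by omega : j ≤ N + 1), ← sum_neg_distrib]
    simp only [neg_sub]
  have hj0' : (j : ℝ) ≠ 0 := by norm_cast; omega
  simp only [htele, r, if_pos hj, if_neg (Nat.not_succ_le_self N)]
  field_simp
  ring

lemma forall_eq_zero_and_eq_one_of_le_sum_mul {N : ℕ} {α u : ℕ → ℝ}
    (hα : ∀ k ≤ N, 0 ≤ α k) (hαN : α N ≤ 1) (hu : ∀ k < N, u k < 0) (huN : 0 < u N)
    (h : u N ≤ ∑ k ∈ range (N + 1), α k * u k) :
    (∀ k < N, α k = 0) ∧ α N = 1 := by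
  rw [sum_range_succ] at h
  have hterm : ∀ k ∈ range N, α k * u k ≤ 0 := fun k hk =>
    mul_nonpos_of_nonneg_of_nonpos (hα k (mem_range.mp hk).le) (hu k (mem_range.mp hk)).le
  have hlow := sum_nonpos hterm
  have hαN' : α N * u N ≤ u N := mul_le_of_le_one_left huN.le hαN
  have hzero : ∑ k ∈ range N, α k * u k = 0 := by linarith
  refine ⟨fun k hk => ?_, le_antisymm hαN ?_⟩
  · have := (sum_eq_zero_iff_of_nonpos hterm).mp hzero k (mem_range.mpr hk)
    exact (mul_eq_zero.mp this).resolve_right (hu k hk).ne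
  · nlinarith

theorem stmt15_general (N : ℕ) (hN : 2 ≤ N) (P v : ℕ → ℝ) (p : ℝ)
    (huN : 0 < ∑ j ∈ Finset.range (N + 1), P j * Delta N j * (v j - p))
    (huk : ∀ k < N, ∑ j ∈ Finset.range (N + 1), P j * Delta k j * (v j - p) < 0)
    (q : ℕ → ℝ)
    (hq01 : ∀ j ≤ N, 0 ≤ q j ∧ q j ≤ 1)
    (hchain : ∀ j, 1 ≤ j → j ≤ N → q (j - 1) ≥ (((j : ℝ) - 1) / (j : ℝ)) * q j) :
    (∑ j ∈ Finset.range (N + 1), P j * Delta N j * (v j - p) ≤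
        ∑ j ∈ Finset.range (N + 1), P j * q j * (v j - p)) ↔
      ∀ j ≤ N, q j = (j : ℝ) / (N : ℝ) := by
  have hDeltaN : ∀ j ≤ N, Delta N j = j / N := fun j hj => Delta_of_le (by omega) hj
  change utility N P v p (Delta N) ≤ utility N P v p q ↔ _
  constructor
  · intro h
    rw [utility_eq_sum_of_eq_sum fun j hj => (sum_deltaCoeff_mul_Delta q hj).symm] at h
    have hcoeff : ∀ k ≤ N, 0 ≤ deltaCoeff N q k :=
      fun k hk => deltaCoeff_nonneg (hq01 N le_rfl).1 hchain hk
    obtain ⟨hlow, htop⟩ := forall_eq_zero_and_eq_one_of_le_sum_mul hcoeff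
      ((deltaCoeff_self N q).trans_le (hq01 N le_rfl).2) huk huN h
    intro j hj
    rw [← sum_deltaCoeff_mul_Delta q hj, sum_eq_single_of_mem N (by simp), htop, one_mul,
      hDeltaN j hj]
    intro k hk hkN
    rw [hlow k (by simp at hk; omega), zero_mul]
  · intro hq
    exact (utility_congr fun j hj => (hq j hj).trans (hDeltaN j hj).symm).ge

/-- if u_N(p) > 0 and u_k(p) < 0 for k < N, then for q ∈ Q the
receiver's utility is at least u_N(p) iff q = q^N, i.e. q_j = j/N. -/
theorem stmt15 (N : ℕ) (hN : 2 ≤ N) (P v : ℕ → ℝ) (p : ℝ)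
    (hP : ∀ j ≤ N, 0 < P j)
    (hv0 : 0 ≤ v 0) (hv : ∀ j < N, v j < v (j + 1))
    (huN : 0 < ∑ j ∈ Finset.range (N + 1), P j * Delta N j * (v j - p))
    (huk : ∀ k < N, ∑ j ∈ Finset.range (N + 1), P j * Delta k j * (v j - p) < 0)
    (q : ℕ → ℝ)
    (hq01 : ∀ j ≤ N, 0 ≤ q j ∧ q j ≤ 1)
    (hchain : ∀ j, 1 ≤ j → j ≤ N → q (j - 1) ≥ (((j : ℝ) - 1) / (j : ℝ)) * q j) :
    (∑ j ∈ Finset.range (N + 1), P j * Delta N j * (v j - p) ≤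
        ∑ j ∈ Finset.range (N + 1), P j * q j * (v j - p)) ↔
      ∀ j ≤ N, q j = (j : ℝ) / (N : ℝ) :=
  stmt15_general N hN P v p huN huk q hq01 hchain
end

section
/- Fix integers 1 ≤ n ≤ N, 1 ≤ k ≤ N, and set m = min(n,k), m' = min(n, N−k). For min(n,k) ≤ j ≤ N − min(n,N−k) − 1, define f(k|j) = [C(min(j,k), m)·C(min(N−j, N−k), m')] / [C(k,m)·C(N−k,m')]. Then f(k|j+1)/f(k|j) equals (N−j−m')/(N−j) if k ≤ j and (j+1)/(j+1−m) otherwise, and this ratio is weakly increasing in k. -/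
/-- f(k|j) = P((T^k_n, B^{N−k}_n) = (min(n,k), 0) | |θ| = j). -/
noncomputable def fk (N n k j : ℕ) : ℝ :=
  ((Nat.choose (min j k) (min n k) : ℝ) *
      (Nat.choose (min (N - j) (N - k)) (min n (N - k)) : ℝ)) /
    ((Nat.choose k (min n k) : ℝ) * (Nat.choose (N - k) (min n (N - k)) : ℝ))

/-- The closed form of the one-step likelihood ratio f(k|j+1)/f(k|j). -/
noncomputable def gratio (N n k j : ℕ) : ℝ :=
  if k ≤ j then ((N : ℝ) - (j : ℝ) - ((min n (N - k) : ℕ) : ℝ)) / ((N : ℝ) - (j : ℝ))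
  else ((j : ℝ) + 1) / ((j : ℝ) + 1 - ((min n k : ℕ) : ℝ))


lemma key_nat (s m : ℕ) : (s+1).choose m * (s+1-m) = (s+1) * s.choose m := by
  have h1 := Nat.choose_succ_right_eq (s+1) m
  have h2 := Nat.add_one_mul_choose_eq s m
  omega

lemma key_real (s m : ℕ) (h : m ≤ s+1) :
    (Nat.choose (s+1) m : ℝ) * ((s:ℝ)+1-(m:ℝ)) = ((s:ℝ)+1) * (Nat.choose s m : ℝ) := by
  have h1 : (((s+1).choose m : ℕ) : ℝ) * ((s+1-m : ℕ):ℝ) = ((s+1 : ℕ):ℝ) * ((s.choose m : ℕ) : ℝ) := by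
    exact_mod_cast congrArg (Nat.cast : ℕ → ℝ) (key_nat s m)
  rw [Nat.cast_sub h] at h1
  push_cast at h1 ⊢
  linarith

/-- on the support min(n,k) ≤ j ≤ N − min(n,N−k) − 1, the ratio
f(k|j+1)/f(k|j) equals (N−j−m')/(N−j) if k ≤ j and (j+1)/(j+1−m) otherwise, and this
ratio is weakly increasing in k. -/
theorem stmt17 (N n k : ℕ) (hn : 1 ≤ n) (hnN : n ≤ N) (hk : 1 ≤ k) (hkN : k ≤ N) :
    (∀ j, min n k ≤ j → j + min n (N - k) + 1 ≤ N →
      fk N n k (j + 1) / fk N n k j = gratio N n k j) ∧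
    (∀ j k₁ k₂ : ℕ, 1 ≤ k₁ → k₁ ≤ k₂ → k₂ ≤ N →
      min n k₁ ≤ j → j + min n (N - k₁) + 1 ≤ N →
      min n k₂ ≤ j → j + min n (N - k₂) + 1 ≤ N →
      gratio N n k₁ j ≤ gratio N n k₂ j) := by
  constructor
  · intro j hj1 hj2
    set m := min n k with hm
    set m' := min n (N - k) with hm'
    have hmk : m ≤ k := min_le_right n k
    have hm'k : m' ≤ N - k := min_le_right n (N - k)
    have hCk : (Nat.choose k m : ℝ) ≠ 0 :=
      Nat.cast_ne_zero.mpr (Nat.choose_pos hmk).ne'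
    have hCk' : (Nat.choose (N - k) m' : ℝ) ≠ 0 :=
      Nat.cast_ne_zero.mpr (Nat.choose_pos hm'k).ne'
    unfold fk gratio
    by_cases hkj : k ≤ j
    · rw [if_pos hkj]
      have e1 : min (j+1) k = k := min_eq_right (by omega)
      have e2 : min j k = k := min_eq_right hkj
      have e3 : min (N - (j+1)) (N - k) = N - (j+1) := min_eq_left (by omega)
      have e4 : min (N - j) (N - k) = N - j := min_eq_left (by omega)
      rw [e1, e2, e3, e4]
      have hjN : j + 1 ≤ N := by omega
      have hs : N - j = (N - (j+1)) + 1 := by omega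
      have hB0 : (Nat.choose (N - j) m' : ℝ) ≠ 0 :=
        Nat.cast_ne_zero.mpr (Nat.choose_pos (by omega)).ne'
      have key := key_real (N - (j+1)) m' (by omega)
      have hc1 : ((N - (j+1) : ℕ) : ℝ) = (N:ℝ) - (j:ℝ) - 1 := by
        rw [Nat.cast_sub hjN]; push_cast; ring
      rw [hc1] at key
      have hc2 : ((N - j : ℕ) : ℝ) = (N:ℝ) - (j:ℝ) := by
        rw [Nat.cast_sub (by omega)]
      have hNj : (0:ℝ) < (N:ℝ) - (j:ℝ) := by
        have : (j:ℝ) < (N:ℝ) := by exact_mod_cast (by omega : j < N)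
        linarith
      have hD : (Nat.choose k m : ℝ) * (Nat.choose (N - k) m' : ℝ) ≠ 0 :=
        mul_ne_zero hCk hCk'
      rw [hs, div_div_div_comm, div_self hD, div_one, mul_div_mul_left _ _ hCk,
        div_eq_div_iff (by rw [← hs]; exact hB0) (by linarith)]
      linear_combination -key
    · rw [if_neg hkj]
      have e1 : min (j+1) k = j+1 := min_eq_left (by omega)
      have e2 : min j k = j := min_eq_left (by omega)
      have e3 : min (N - (j+1)) (N - k) = N - k := min_eq_right (by omega)
      have e4 : min (N - j) (N - k) = N - k := min_eq_right (by omega)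
      rw [e1, e2, e3, e4]
      have hmj : m ≤ j := hj1
      have hB0 : (Nat.choose j m : ℝ) ≠ 0 :=
        Nat.cast_ne_zero.mpr (Nat.choose_pos hmj).ne'
      have key := key_real j m (by omega)
      have hden : (0:ℝ) < (j:ℝ) + 1 - (m:ℝ) := by
        have : (m:ℝ) ≤ (j:ℝ) := by exact_mod_cast hmj
        linarith
      have hD : (Nat.choose k m : ℝ) * (Nat.choose (N - k) m' : ℝ) ≠ 0 :=
        mul_ne_zero hCk hCk'
      rw [div_div_div_comm, div_self hD, div_one, mul_div_mul_right _ _ hCk',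
        div_eq_div_iff hB0 (by linarith)]
      linear_combination key
  · intro j k₁ k₂ hk₁ h12 hk₂N hj1 hj2 hj3 hj4
    unfold gratio
    have hjN : (j:ℝ) < (N:ℝ) := by exact_mod_cast (by omega : j < N)
    by_cases h1 : k₁ ≤ j <;> by_cases h2 : k₂ ≤ j
    · rw [if_pos h1, if_pos h2]
      have hmm : min n (N - k₂) ≤ min n (N - k₁) := min_le_min le_rfl (by omega)
      rw [div_le_div_iff_of_pos_right (by linarith : (0:ℝ) < (N:ℝ) - j)]
      have : ((min n (N - k₂) : ℕ) : ℝ) ≤ ((min n (N - k₁) : ℕ) : ℝ) := by exact_mod_cast hmm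
      linarith
    · rw [if_pos h1, if_neg h2]
      have hm2 : min n k₂ ≤ j := hj3
      have hm2' : ((min n k₂ : ℕ):ℝ) ≤ (j:ℝ) := by exact_mod_cast hm2
      have hm1' : (0:ℝ) ≤ ((min n (N - k₁) : ℕ):ℝ) := by positivity
      calc ((N:ℝ) - j - (min n (N-k₁) : ℕ)) / ((N:ℝ) - j) ≤ 1 := by
            rw [div_le_one (by linarith)]; linarith
        _ ≤ ((j:ℝ) + 1) / ((j:ℝ) + 1 - (min n k₂ : ℕ)) := by
            rw [one_le_div (by linarith)]; linarith
    · omega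
    · rw [if_neg h1, if_neg h2]
      have hm1 : ((min n k₁ : ℕ):ℝ) ≤ (j:ℝ) := by exact_mod_cast hj1
      have hm2 : ((min n k₂ : ℕ):ℝ) ≤ (j:ℝ) := by exact_mod_cast hj3
      have hmm : ((min n k₁ : ℕ):ℝ) ≤ ((min n k₂ : ℕ):ℝ) := by
        exact_mod_cast min_le_min le_rfl h12
      apply div_le_div_of_nonneg_left (by linarith) (by linarith) (by linarith)
end
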